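/- arXiv:2002.09059 — 4 statements merged into one kernel-verified Lean document; each statement's English description precedes it below -/
import Mathlib

section
/- If p = q = 1/2, N is even, and Z ∈ {0,1}^N is an exchangeable random vector with ‖Z‖ = N/2 almost surely, then ρ_n := E[∏_{j∈A}(1 - Z[j]/p)] for any A with |A| = n satisfies: ρ_n = ∑_{k=0}^n [C(N/2,k)C(N/2,n-k)/C(N,n)] (-1)^k; moreover ρ_n = 0 when n is odd, and ρ_{2m} = (-1)^m C(N/2,m)/C(N,2m) for m ≤ N/2. -/
open Finset

open Polynomial in
lemma coeff_one_sub_X_pow' (M k : ℕ) :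
    ((1 - X : ℝ[X]) ^ M).coeff k = (-1) ^ k * (M.choose k : ℝ) := by
  have h : (1 - X : ℝ[X]) = (-X) + 1 := by ring
  rw [h, add_pow, finset_sum_coeff]
  have hterm : ∀ j ∈ range (M + 1),
      (((-X : ℝ[X]) ^ j * 1 ^ (M - j) * (M.choose j : ℝ[X]))).coeff k
        = if j = k then (-1) ^ k * (M.choose k : ℝ) else 0 := by
    intro j _
    have hC : ((-X : ℝ[X]) ^ j * 1 ^ (M - j) * (M.choose j : ℝ[X]))
        = Polynomial.C ((-1) ^ j * (M.choose j : ℝ)) * X ^ j := by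
      rw [one_pow, mul_one, map_mul, map_pow, map_neg, map_one, Polynomial.C_eq_natCast]
      ring
    rw [hC, coeff_C_mul, coeff_X_pow]
    rw [mul_ite, mul_one, mul_zero]
    by_cases hjk : j = k
    · subst hjk; simp
    · rw [if_neg (fun h => hjk h.symm), if_neg hjk]
  rw [Finset.sum_congr rfl hterm, Finset.sum_ite_eq' (range (M+1)) k]
  split_ifs with hk
  · rfl
  · simp only [Finset.mem_range] at hk
    rw [Nat.choose_eq_zero_of_lt (by omega)]
    simp

open Polynomial in
lemma sum_neg_one_pow_inter (N m : ℕ) (T : Finset (Fin N)) :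
    ∑ S ∈ Finset.powersetCard m (Finset.univ : Finset (Fin N)), ((-1 : ℝ)) ^ ((T ∩ S).card)
      = (((1 - X) ^ T.card * (1 + X) ^ (N - T.card) : ℝ[X])).coeff m := by
  classical
  set f : Fin N → ℝ[X] := fun i => (if i ∈ T then (-1 : ℝ[X]) else 1) * X with hf
  set g : Fin N → ℝ[X] := fun i => 1 with hg
  have hprod : ∏ i ∈ (univ : Finset (Fin N)), (f i + g i)
      = (1 - X) ^ T.card * (1 + X) ^ (N - T.card) := by
    have h1 : ∀ i, f i + g i = if i ∈ T then (1 - X : ℝ[X]) else (1 + X) := by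
      intro i; simp only [hf, hg]; split_ifs <;> ring
    rw [Finset.prod_congr rfl (fun i _ => h1 i), Finset.prod_ite,
      Finset.prod_const, Finset.prod_const, Finset.filter_mem_eq_inter,
      Finset.univ_inter, Finset.filter_not, Finset.filter_mem_eq_inter,
      Finset.univ_inter, Finset.card_sdiff_of_subset (Finset.subset_univ T), Finset.card_univ,
      Fintype.card_fin]
  have hexp : ∏ i ∈ (univ : Finset (Fin N)), (f i + g i)
      = ∑ t ∈ (univ : Finset (Fin N)).powerset,
          Polynomial.C ((-1 : ℝ) ^ ((T ∩ t).card)) * X ^ t.card := by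
    rw [Finset.prod_add]
    refine Finset.sum_congr rfl (fun t ht => ?_)
    have h2 : ∏ i ∈ univ \ t, g i = 1 := Finset.prod_const_one
    rw [h2, mul_one, hf]
    rw [Finset.prod_mul_distrib, Finset.prod_const, Finset.prod_ite,
      Finset.prod_const, Finset.prod_const, one_pow, mul_one,
      Finset.filter_mem_eq_inter, Finset.inter_comm]
    congr 1
    rw [map_pow, map_neg, map_one]
  rw [← hprod, hexp, finset_sum_coeff]
  rw [Finset.powersetCard_eq_filter, Finset.sum_filter]
  refine Finset.sum_congr rfl (fun t ht => ?_)
  rw [coeff_C_mul, coeff_X_pow]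
  by_cases h : t.card = m
  · rw [if_pos h, if_pos h.symm, mul_one]
  · rw [if_neg h, if_neg (fun hh => h hh.symm), mul_zero]

open Polynomial in
lemma double_count (N n M : ℕ) :
    (N.choose n : ℝ) * (((1 - X) ^ n * (1 + X) ^ (N - n) : ℝ[X]).coeff M)
      = (N.choose M : ℝ) * (((1 - X) ^ M * (1 + X) ^ (N - M) : ℝ[X]).coeff n) := by
  classical
  have hL : ∑ T ∈ powersetCard n (univ : Finset (Fin N)),
        ∑ S ∈ powersetCard M (univ : Finset (Fin N)), ((-1 : ℝ)) ^ ((T ∩ S).card)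
      = (N.choose n : ℝ) * (((1 - X) ^ n * (1 + X) ^ (N - n) : ℝ[X]).coeff M) := by
    rw [Finset.sum_congr rfl (fun T hT => ?_)]
    · rw [Finset.sum_const, Finset.card_powersetCard, Finset.card_univ, Fintype.card_fin,
        nsmul_eq_mul]
    · rw [sum_neg_one_pow_inter N M T, (Finset.mem_powersetCard.1 hT).2]
  have hR : ∑ T ∈ powersetCard n (univ : Finset (Fin N)),
        ∑ S ∈ powersetCard M (univ : Finset (Fin N)), ((-1 : ℝ)) ^ ((T ∩ S).card)
      = (N.choose M : ℝ) * (((1 - X) ^ M * (1 + X) ^ (N - M) : ℝ[X]).coeff n) := by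
    rw [Finset.sum_comm]
    rw [Finset.sum_congr rfl (fun S hS => ?_)]
    · rw [Finset.sum_const, Finset.card_powersetCard, Finset.card_univ, Fintype.card_fin,
        nsmul_eq_mul]
    · rw [Finset.sum_congr rfl (fun T _ => by rw [Finset.inter_comm]),
        sum_neg_one_pow_inter N n S, (Finset.mem_powersetCard.1 hS).2]
  rw [← hL, hR]

open Polynomial in
lemma coeff_one_sub_X_sq_pow (M k : ℕ) :
    ((1 - X ^ 2 : ℝ[X]) ^ M).coeff k
      = ∑ j ∈ range (M + 1), if k = 2 * j then (-1) ^ j * (M.choose j : ℝ) else 0 := by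
  have h : (1 - X ^ 2 : ℝ[X]) = (-(X ^ 2)) + 1 := by ring
  rw [h, add_pow, finset_sum_coeff]
  refine Finset.sum_congr rfl (fun j _ => ?_)
  have hC : ((-(X ^ 2) : ℝ[X]) ^ j * 1 ^ (M - j) * (M.choose j : ℝ[X]))
      = Polynomial.C ((-1) ^ j * (M.choose j : ℝ)) * X ^ (2 * j) := by
    rw [one_pow, mul_one, map_mul, map_pow, map_neg, map_one, Polynomial.C_eq_natCast,
      pow_mul]
    ring
  rw [hC, coeff_C_mul, coeff_X_pow, mul_ite, mul_one, mul_zero]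

open Polynomial in
lemma coeff_one_sub_X_sq_pow_odd (M k : ℕ) (hk : Odd k) :
    ((1 - X ^ 2 : ℝ[X]) ^ M).coeff k = 0 := by
  rw [coeff_one_sub_X_sq_pow]
  refine Finset.sum_eq_zero (fun j _ => ?_)
  obtain ⟨r, hr⟩ := hk
  rw [if_neg (by omega)]

open Polynomial in
lemma coeff_one_sub_X_sq_pow_even (M m : ℕ) :
    ((1 - X ^ 2 : ℝ[X]) ^ M).coeff (2 * m) = (-1) ^ m * (M.choose m : ℝ) := by
  rw [coeff_one_sub_X_sq_pow]
  have hterm : ∀ j ∈ range (M + 1),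
      (if 2 * m = 2 * j then (-1) ^ j * (M.choose j : ℝ) else 0)
        = if j = m then (-1) ^ m * (M.choose m : ℝ) else 0 := by
    intro j _
    by_cases h : j = m
    · subst h; rw [if_pos rfl, if_pos rfl]
    · rw [if_neg (by omega), if_neg h]
  rw [Finset.sum_congr rfl hterm, Finset.sum_ite_eq' (range (M + 1)) m]
  split_ifs with hm
  · rfl
  · simp only [Finset.mem_range] at hm
    rw [Nat.choose_eq_zero_of_lt (by omega)]
    simp

theorem stmt_5 (N : ℕ) (hN : Even N) (A : Finset (Fin N)) (n : ℕ) (hn : A.card = n)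
    (ρ : ℝ)
    (hρ : ρ = ((N.choose (N / 2) : ℝ))⁻¹ *
      ∑ S ∈ Finset.powersetCard (N / 2) (Finset.univ : Finset (Fin N)),
        (-1 : ℝ) ^ ((A ∩ S).card)) :
    ρ = ∑ k ∈ Finset.range (n + 1),
        ((N / 2).choose k : ℝ) * ((N / 2).choose (n - k) : ℝ) / (N.choose n : ℝ) * (-1) ^ k
    ∧ (Odd n → ρ = 0)
    ∧ ∀ m : ℕ, n = 2 * m → m ≤ N / 2 →
        ρ = (-1) ^ m * ((N / 2).choose m : ℝ) / (N.choose (2 * m) : ℝ) := by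
  classical
  obtain ⟨M, hM⟩ := hN
  have hM2 : N / 2 = M := by omega
  have hNM : N - M = M := by omega
  have hnN : n ≤ N := by
    rw [← hn]
    calc A.card ≤ (univ : Finset (Fin N)).card := Finset.card_le_univ A
    _ = N := by rw [Finset.card_univ, Fintype.card_fin]
  have hcn : (N.choose n : ℝ) ≠ 0 := by
    exact_mod_cast (Nat.choose_pos hnN).ne'
  have hcM : (N.choose M : ℝ) ≠ 0 := by
    exact_mod_cast (Nat.choose_pos (by omega : M ≤ N)).ne'
  simp only [hM2] at hρ ⊢
  -- express ρ via the polynomial coefficient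
  have hρ1 : ρ = (N.choose M : ℝ)⁻¹
      * (((1 - Polynomial.X) ^ n * (1 + Polynomial.X) ^ (N - n) : Polynomial ℝ).coeff M) := by
    rw [hρ, sum_neg_one_pow_inter N M A, hn]
  have hdc := double_count N n M
  rw [hNM] at hdc
  have hsq : ((1 - Polynomial.X) ^ M * (1 + Polynomial.X) ^ M : Polynomial ℝ)
      = (1 - Polynomial.X ^ 2 : Polynomial ℝ) ^ M := by
    rw [← mul_pow]; ring_nf
  have hρ2 : ρ = (N.choose n : ℝ)⁻¹ * ((1 - Polynomial.X ^ 2 : Polynomial ℝ) ^ M).coeff n := by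
    rw [hρ1, ← hsq]
    field_simp
    rw [mul_comm ((N.choose n : ℝ)) _] at hdc
    linarith [hdc]
  refine ⟨?_, ?_, ?_⟩
  · -- part 1
    rw [hρ2, ← hsq, Polynomial.coeff_mul, Finset.Nat.sum_antidiagonal_eq_sum_range_succ_mk,
      Finset.mul_sum]
    refine Finset.sum_congr rfl (fun k hk => ?_)
    rw [coeff_one_sub_X_pow', Polynomial.coeff_one_add_X_pow]
    ring
  · intro hodd
    rw [hρ2, coeff_one_sub_X_sq_pow_odd M n hodd, mul_zero]
  · intro m hnm _
    rw [hρ2, hnm, coeff_one_sub_X_sq_pow_even M m, ← hnm]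
    ring
end

section
/- If Z ∈ {0,1}^N is exchangeable, then for any A ⊆ [N] with |A| = n, E[∏_{j∈A}(1 - Z[j]/p)] = E[Q_n(‖Z‖; N, p)], where Q_n are the Krawtchouk polynomials. -/
open Finset Polynomial

/-! Averaging the product `∏_{j∈A} (1 - Z_j/p)` over all `n`-subsets `A` gives the `n`-th
elementary symmetric function of the `1 - Z_j/p`, i.e. the coefficient of `s^n` in
`∏_j (1 + (1 - Z_j/p) s) = (1 - ((1-p)/p) s)^‖Z‖ (1 + s)^(N-‖Z‖)`, which is
`binomial(N,n) Q_n(‖Z‖)` by the generating function. Exchangeability makes the expectation of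
that product the same for every `n`-subset, so averaging costs nothing. -/

theorem Polynomial.coeff_prod_one_add_C_mul_X {ι R : Type*} [CommSemiring R]
    (s : Finset ι) (w : ι → R) (n : ℕ) :
    (∏ j ∈ s, (1 + C (w j) * X)).coeff n = ∑ B ∈ s.powersetCard n, ∏ j ∈ B, w j := by
  classical
  simp only [prod_one_add, prod_mul_distrib, ← map_prod, prod_const, finsetSum_coeff,
    coeff_C_mul_X_pow, ← sum_filter, powersetCard_eq_filter, eq_comm (a := n)]

theorem Polynomial.coeff_eq_of_forall_eval_eq_sum {R : Type*} [CommRing R] [IsDomain R]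
    [Infinite R] {q : R[X]} {a : ℕ → R} {m : ℕ}
    (h : ∀ s, ∑ k ∈ range m, a k * s ^ k = q.eval s) {k : ℕ} (hk : k < m) :
    q.coeff k = a k := by
  have hq : q = ∑ k ∈ range m, C (a k) * X ^ k :=
    Polynomial.funext fun s => by simp [← h, eval_finsetSum]
  simp [hq, finsetSum_coeff, hk]

theorem Fintype.prod_comp_bool {ι M : Type*} [Fintype ι] [CommMonoid M]
    (g : Bool → M) (z : ι → Bool) :
    ∏ j, g (z j) = g true ^ #{j | z j = true} * g false ^ (card ι - #{j | z j = true}) := by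
  have hg : ∀ j, g (z j) = if z j = true then g true else g false := fun j => by
    cases z j <;> rfl
  simp_rw [hg, prod_ite, prod_const, ← card_univ,
    ← card_filter_add_card_filter_not (s := univ) (fun j => z j = true), Nat.add_sub_cancel_left]

theorem card_filter_comp_perm {ι : Type*} [Fintype ι] (z : ι → Bool) (σ : Equiv.Perm ι) :
    #{j | (z ∘ σ) j = true} = #{j | z j = true} :=
  card_bijective σ σ.bijective (by simp)

theorem sum_mul_prod_eq_of_card_eq {ι α R : Type*} [Fintype ι] [DecidableEq ι] [Fintype α]
    [CommSemiring R] {f : (ι → α) → R} (hf : ∀ (σ : Equiv.Perm ι) z, f (z ∘ σ) = f z)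
    (φ : α → R) {A B : Finset ι} (hAB : #A = #B) :
    ∑ z, f z * ∏ j ∈ A, φ (z j) = ∑ z, f z * ∏ j ∈ B, φ (z j) := by
  obtain ⟨σ, rfl⟩ := Equiv.Perm.exists_map_finset_eq A B hAB
  rw [← (σ.arrowCongr (Equiv.refl α)).sum_comp
    (fun z => f z * ∏ j ∈ A.map σ.toEmbedding, φ (z j))]
  have he : ∀ z, σ.arrowCongr (Equiv.refl α) z = z ∘ σ.symm := fun _ => rfl
  simp [he, hf, prod_map]

theorem sum_powersetCard_prod_eq_choose_mul {N : ℕ} {p : ℝ} (hp : p ≠ 0) {Q : ℕ → ℕ → ℝ}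
    (hQ : ∀ x ≤ N, ∀ s : ℝ,
      ∑ n ∈ range (N + 1), (N.choose n : ℝ) * Q n x * s ^ n
        = (1 - ((1 - p) / p) * s) ^ x * (1 + s) ^ (N - x))
    (z : Fin N → Bool) {n : ℕ} (hn : n ≤ N) :
    ∑ B ∈ powersetCard n univ, ∏ j ∈ B, (1 - (if z j then (1 : ℝ) else 0) / p)
      = N.choose n * Q n #{j | z j = true} := by
  have hx : #{j | z j = true} ≤ N := (card_le_univ _).trans_eq (Fintype.card_fin N)
  rw [← coeff_prod_one_add_C_mul_X,
    Fintype.prod_comp_bool (fun b => 1 + C (1 - (if b then (1 : ℝ) else 0) / p) * X),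
    Fintype.card_fin]
  refine coeff_eq_of_forall_eval_eq_sum (a := fun k => N.choose k * Q k _) (fun s => ?_)
    (Nat.lt_succ_of_le hn)
  rw [hQ _ hx]
  simp only [↓reduceIte, Bool.false_eq_true, zero_div, sub_zero, one_mul, eval_mul, eval_pow,
    eval_add, eval_one, eval_C, eval_X]
  congr 2
  field_simp
  ring

theorem stmt_8_general (N : ℕ) (p : ℝ) (hp : 0 < p)
    (Q : ℕ → ℕ → ℝ)
    (hQ : ∀ x ≤ N, ∀ s : ℝ,
      ∑ n ∈ Finset.range (N + 1), (N.choose n : ℝ) * Q n x * s ^ n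
        = (1 - ((1 - p) / p) * s) ^ x * (1 + s) ^ (N - x))
    (f : (Fin N → Bool) → ℝ)
    (hexch : ∀ z w : Fin N → Bool,
      (Finset.univ.filter (fun j => z j = true)).card
        = (Finset.univ.filter (fun j => w j = true)).card → f z = f w)
    (A : Finset (Fin N)) (n : ℕ) (hn : A.card = n) :
    ∑ z : Fin N → Bool, f z * ∏ j ∈ A, (1 - (if z j then (1 : ℝ) else 0) / p)
      = ∑ z : Fin N → Bool,
          f z * Q n ((Finset.univ.filter (fun j => z j = true)).card) := by
  set φ : Bool → ℝ := fun b => 1 - (if b then (1 : ℝ) else 0) / p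
  have hnN : n ≤ N := hn ▸ (card_le_univ A).trans_eq (Fintype.card_fin N)
  have hperm : ∀ (σ : Equiv.Perm (Fin N)) z, f (z ∘ σ) = f z :=
    fun σ z => hexch _ _ (card_filter_comp_perm z σ)
  apply mul_left_cancel₀ (Nat.cast_ne_zero.2 (Nat.choose_pos hnN).ne' : (N.choose n : ℝ) ≠ 0)
  calc (N.choose n : ℝ) * ∑ z, f z * ∏ j ∈ A, φ (z j)
      = ∑ B ∈ powersetCard n univ, ∑ z, f z * ∏ j ∈ B, φ (z j) := by
        rw [sum_congr rfl fun B hB => sum_mul_prod_eq_of_card_eq hperm φ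
          ((mem_powersetCard.1 hB).2.trans hn.symm), sum_const, card_powersetCard, card_univ,
          Fintype.card_fin, nsmul_eq_mul]
    _ = ∑ z, f z * (N.choose n * Q n #{j | z j = true}) := by
        rw [sum_comm]
        exact sum_congr rfl fun z _ => by
          rw [← mul_sum]
          exact congrArg (f z * ·) (sum_powersetCard_prod_eq_choose_mul hp.ne' hQ z hnN)
    _ = N.choose n * ∑ z, f z * Q n #{j | z j = true} := by
        rw [mul_sum]
        exact sum_congr rfl fun z _ => mul_left_comm _ _ _

theorem stmt_8 (N : ℕ) (p : ℝ) (hp : 0 < p) (hp1 : p < 1)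
    (Q : ℕ → ℕ → ℝ)
    (hQ : ∀ x ≤ N, ∀ s : ℝ,
      ∑ n ∈ Finset.range (N + 1), (N.choose n : ℝ) * Q n x * s ^ n
        = (1 - ((1 - p) / p) * s) ^ x * (1 + s) ^ (N - x))
    (f : (Fin N → Bool) → ℝ) (hf0 : ∀ z, 0 ≤ f z) (hf1 : ∑ z, f z = 1)
    (hexch : ∀ z w : Fin N → Bool,
      (Finset.univ.filter (fun j => z j = true)).card
        = (Finset.univ.filter (fun j => w j = true)).card → f z = f w)
    (A : Finset (Fin N)) (n : ℕ) (hn : A.card = n) :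
    ∑ z : Fin N → Bool, f z * ∏ j ∈ A, (1 - (if z j then (1 : ℝ) else 0) / p)
      = ∑ z : Fin N → Bool,
          f z * Q n ((Finset.univ.filter (fun j => z j = true)).card) :=
  stmt_8_general N p hp Q hQ f hexch A n hn
end

section
/- For fixed n and v ∈ ℝ, if (z_N) is a sequence with (z_N - N p_N)/√(N p_N (1-p_N)) → v and p_N → p ∈ (0,1), then lim_{N→∞} (n! h_n)^{1/2} Q_n(z_N; N, p_N) = (-1)^n H_n(v), where h_n = C(N,n)(p_N/q_N)^n and H_n is the n-th probabilists' Hermite polynomial. -/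
open Finset Filter Polynomial
open Topology

/-!
The generating function `(1 - (q/p) s)^x (1 + s)^(N-x)` satisfies a first-order linear ODE, which
gives the three-term recurrence
`(N - n - 1) Q_{n+2} = (N - x/p - (1 - q/p)(n + 1)) Q_{n+1} - (q/p)(n + 1) Q_n`.
Since `(n+1)! h_{n+1} = (N - n)(p/q) n! h_n`, the scaled values `f_n = √(n! h_n) Q_n(z_N)` satisfy
`f_{n+2} = A_N f_{n+1} - (n + 1) B_N f_n` with `A_N → -v` and `B_N → 1`, while
`f_0 = 1` and `f_1 = -(z_N - N p_N)/√(N p_N q_N) → -v`. So the limits obey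
`L_{n+2} = -v L_{n+1} - (n + 1) L_n`, which is the Hermite recurrence
`H_{n+2} = v H_{n+1} - (n + 1) H_n` twisted by `(-1)^n`.
-/

namespace Polynomial

theorem derivative_hermite (n : ℕ) : derivative (hermite n) = (n : ℤ[X]) * hermite (n - 1) := by
  induction n using Nat.twoStepInduction with
  | zero => simp
  | one => simp
  | more n _ ih =>
    simp only [Nat.add_sub_cancel] at ih ⊢
    rw [hermite_succ (n + 1), derivative_sub, derivative_mul, derivative_X, ih,
      derivative_mul, derivative_natCast]
    push_cast
    linear_combination (-(n : ℤ[X]) - 1) * hermite_succ n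

theorem hermite_add_two (n : ℕ) :
    hermite (n + 2) = X * hermite (n + 1) - ((n : ℤ[X]) + 1) * hermite n := by
  rw [hermite_succ (n + 1), derivative_hermite, Nat.add_sub_cancel]
  push_cast
  ring

theorem coeff_X_sq_mul_derivative_succ {R : Type*} [CommSemiring R] (P : R[X]) (k : ℕ) :
    (X ^ 2 * derivative P).coeff (k + 1) = k * P.coeff k := by
  cases k with
  | zero => simp [sq, mul_assoc, coeff_X_mul, mul_coeff_zero]
  | succ j =>
    rw [show j + 1 + 1 = j + 2 from rfl, coeff_X_pow_mul, coeff_derivative]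
    push_cast
    ring

theorem eq_coeff_of_forall_sum_eq_eval {R : Type*} [CommRing R] [IsDomain R] [Infinite R]
    {N j : ℕ} {b : ℕ → R} {P : R[X]}
    (h : ∀ s, ∑ k ∈ range (N + 1), b k * s ^ k = P.eval s) (hj : j ≤ N) : b j = P.coeff j := by
  have hP : ∑ k ∈ range (N + 1), C (b k) * X ^ k = P :=
    Polynomial.funext fun s => by simpa [eval_finsetSum] using h s
  rw [← hP, finsetSum_coeff]
  simp [coeff_C_mul, coeff_X_pow, Nat.lt_succ_iff.2 hj]

end Polynomial

section GeneratingPolynomial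

variable {R : Type*} [CommRing R]

/-- For `c = q/p` and `m = N - x`, the coefficient of `X^k` is `choose N k * Q_k(x; N, p)`. -/
noncomputable def krawtchoukGen (c : R) (x m : ℕ) : R[X] := (1 - C c * X) ^ x * (1 + X) ^ m

theorem krawtchoukGen_coeff_zero (c : R) (x m : ℕ) : (krawtchoukGen c x m).coeff 0 = 1 := by
  simp [krawtchoukGen, coeff_zero_eq_eval_zero]

theorem krawtchoukGen_coeff_one (c : R) (x m : ℕ) :
    (krawtchoukGen c x m).coeff 1 = m - c * x := by
  have h : (krawtchoukGen c x m).coeff 1 = (derivative (krawtchoukGen c x m)).coeff 0 := by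
    simp [coeff_derivative]
  rw [h, coeff_zero_eq_eval_zero, krawtchoukGen]
  simp only [derivative_mul, derivative_pow, derivative_sub, derivative_add, derivative_one,
    derivative_C, derivative_X, eval_add, eval_sub, eval_mul, eval_pow, eval_one, eval_C, eval_X,
    eval_zero]
  ring

theorem derivative_krawtchoukGen_mul (c : R) (x m : ℕ) :
    derivative (krawtchoukGen c x m) * ((1 - C c * X) * (1 + X))
      = krawtchoukGen c x m * (C (m : R) * (1 - C c * X) - C (c * x) * (1 + X)) := by
  simp only [krawtchoukGen, derivative_mul, derivative_pow, derivative_sub, derivative_add,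
    derivative_one, derivative_C, derivative_X, map_mul, map_natCast]
  cases x <;> cases m <;> (try simp only [Nat.add_sub_cancel, pow_succ, Nat.cast_succ]) <;> ring
theorem krawtchoukGen_coeff_add_two (c : R) (x m k : ℕ) :
    (k + 2) * (krawtchoukGen c x m).coeff (k + 2)
      = (m - c * x - (1 - c) * (k + 1)) * (krawtchoukGen c x m).coeff (k + 1)
        + c * (k - (x + m)) * (krawtchoukGen c x m).coeff k := by
  set P := krawtchoukGen c x m
  have hODE : derivative P + C (1 - c) * (X * derivative P) - C c * (X ^ 2 * derivative P)
      = C (m - c * x : R) * P - C (c * (x + m)) * (X * P) := by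
    have h := derivative_krawtchoukGen_mul c x m
    simp only [map_sub, map_one, map_mul, map_add, map_natCast] at h ⊢
    linear_combination h
  have h := congrArg (coeff · (k + 1)) hODE
  simp only [coeff_add, coeff_sub, coeff_C_mul, coeff_X_mul, coeff_derivative,
    coeff_X_sq_mul_derivative_succ] at h
  push_cast at h
  linear_combination h

end GeneratingPolynomial

theorem Nat.cast_choose_succ_right_eq {R : Type*} [CommRing R] {N k : ℕ} (hk : k ≤ N) :
    (N.choose (k + 1) : R) * (k + 1) = N.choose k * (N - k) := by
  have h := congrArg (Nat.cast : ℕ → R) (Nat.choose_succ_right_eq N k)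
  push_cast [Nat.cast_sub hk] at h
  exact h

/-- `Q k = Q_k(x; N, p)` when `c = q/p`. -/
def HasKrawtchoukGenFun (N x : ℕ) (c : ℝ) (Q : ℕ → ℝ) : Prop :=
  ∀ s : ℝ, ∑ k ∈ range (N + 1), (N.choose k : ℝ) * Q k * s ^ k = (1 - c * s) ^ x * (1 + s) ^ (N - x)

section Krawtchouk

variable {N x : ℕ} {c : ℝ} {Q : ℕ → ℝ}

theorem choose_mul_eq_krawtchoukGen_coeff (hQ : HasKrawtchoukGenFun N x c Q) {k : ℕ} (hk : k ≤ N) :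
    N.choose k * Q k = (krawtchoukGen c x (N - x)).coeff k :=
  Polynomial.eq_coeff_of_forall_sum_eq_eval (b := fun k => N.choose k * Q k)
    (fun s => by simpa [krawtchoukGen] using hQ s) hk

theorem krawtchouk_zero (hQ : HasKrawtchoukGenFun N x c Q) : Q 0 = 1 := by
  simpa [krawtchoukGen_coeff_zero] using choose_mul_eq_krawtchoukGen_coeff hQ N.zero_le

theorem krawtchouk_one (hQ : HasKrawtchoukGenFun N x c Q) (hx : x ≤ N) (hN : 1 ≤ N) :
    N * Q 1 = N - x - c * x := by
  simpa [krawtchoukGen_coeff_one, Nat.cast_sub hx] using choose_mul_eq_krawtchoukGen_coeff hQ hN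

theorem krawtchouk_add_two (hQ : HasKrawtchoukGenFun N x c Q) (hx : x ≤ N) {k : ℕ}
    (hk : k + 2 ≤ N) :
    ((N : ℝ) - k - 1) * Q (k + 2)
      = (N - x - c * x - (1 - c) * (k + 1)) * Q (k + 1) - c * (k + 1) * Q k := by
  have hrec := krawtchoukGen_coeff_add_two c x (N - x) k
  rw [← choose_mul_eq_krawtchoukGen_coeff hQ hk, ← choose_mul_eq_krawtchoukGen_coeff hQ (by omega),
    ← choose_mul_eq_krawtchoukGen_coeff hQ (by omega), Nat.cast_sub hx] at hrec
  have h2 := Nat.cast_choose_succ_right_eq (R := ℝ) (N := N) (k := k + 1) (by omega)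
  have h1 := Nat.cast_choose_succ_right_eq (R := ℝ) (N := N) (k := k) (by omega)
  have hC : (N.choose (k + 1) : ℝ) ≠ 0 := by exact_mod_cast (Nat.choose_pos (by omega)).ne'
  refine mul_right_cancel₀ hC ?_
  push_cast at h2 hrec
  linear_combination hrec - Q (k + 2) * h2 + c * Q k * h1

end Krawtchouk

open Nat in
/-- `√(k! h_k)` in the notation of the statement, with `r = p/q`. -/
noncomputable def krawtchoukScale (N : ℕ) (r : ℝ) (k : ℕ) : ℝ := √(k ! * N.choose k * r ^ k)

theorem krawtchoukScale_zero (N : ℕ) (r : ℝ) : krawtchoukScale N r 0 = 1 := by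
  simp [krawtchoukScale]

theorem krawtchoukScale_succ {N k : ℕ} (hk : k ≤ N) {r : ℝ} (hr : 0 ≤ r) :
    krawtchoukScale N r (k + 1) = √((N - k) * r) * krawtchoukScale N r k := by
  have hNk : (0 : ℝ) ≤ N - k := by rw [sub_nonneg]; exact_mod_cast hk
  rw [krawtchoukScale, krawtchoukScale, ← Real.sqrt_mul (mul_nonneg hNk hr)]
  congr 1
  push_cast [Nat.factorial_succ]
  linear_combination ((k.factorial : ℝ) * r ^ (k + 1)) * Nat.cast_choose_succ_right_eq (R := ℝ) hk

theorem krawtchoukScale_mul_add_two {N x : ℕ} {r : ℝ} (hr : 0 < r) {Q : ℕ → ℝ}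
    (hQ : HasKrawtchoukGenFun N x r⁻¹ Q) (hx : x ≤ N) {k : ℕ} (hk : k + 2 ≤ N) :
    krawtchoukScale N r (k + 2) * Q (k + 2)
      = (N - x - r⁻¹ * x - (1 - r⁻¹) * (k + 1)) * √(r / (N - k - 1))
          * (krawtchoukScale N r (k + 1) * Q (k + 1))
        - (k + 1) * √((N - k) / (N - k - 1)) * (krawtchoukScale N r k * Q k) := by
  have hrec := krawtchouk_add_two hQ hx hk
  have hd : (0 : ℝ) < N - k - 1 := by
    have : (k : ℝ) + 2 ≤ N := by exact_mod_cast hk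
    linarith
  rw [krawtchoukScale_succ (k := k + 1) (by omega) hr.le, krawtchoukScale_succ (by omega) hr.le]
  push_cast
  rw [← sub_sub, Real.sqrt_mul hd.le, Real.sqrt_mul (by linarith), Real.sqrt_div' _ hd.le,
    Real.sqrt_div' _ hd.le]
  have hs := Real.sq_sqrt hr.le
  have ht := Real.sq_sqrt hd.le
  field_simp at hrec ⊢
  rw [hs, ht]
  linear_combination (r * √((N : ℝ) - k) * krawtchoukScale N r k) * hrec

theorem krawtchoukScale_mul_one {N x : ℕ} {r : ℝ} (hr : 0 < r) {Q : ℕ → ℝ}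
    (hQ : HasKrawtchoukGenFun N x r⁻¹ Q) (hx : x ≤ N) (hN : 1 ≤ N) :
    krawtchoukScale N r 1 * Q 1 = (N - x - r⁻¹ * x) * √(r / N) := by
  have hN0 : (0 : ℝ) < N := by exact_mod_cast hN
  have hs := Real.sq_sqrt hN0.le
  rw [krawtchoukScale_succ (by omega) hr.le, krawtchoukScale_zero, ← krawtchouk_one hQ hx hN,
    Nat.cast_zero, sub_zero, Real.sqrt_mul hN0.le, Real.sqrt_div' _ hN0.le]
  field_simp
  rw [hs]
  ring

theorem neg_standardized_eq {N x : ℕ} {p : ℝ} (hp : 0 < p) (hp1 : p < 1) (hN : 1 ≤ N) :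
    -((x - N * p) / √(N * p * (1 - p)))
      = (N - x - (p / (1 - p))⁻¹ * x) * √(p / (1 - p) / N) := by
  have hN0 : (0 : ℝ) < N := by exact_mod_cast hN
  have hq : 0 < 1 - p := by linarith
  rw [Real.sqrt_div' _ hN0.le, Real.sqrt_div' _ hq.le, Real.sqrt_mul (by positivity),
    Real.sqrt_mul hN0.le]
  have hsp := Real.sq_sqrt hp.le
  have : 0 < √p := Real.sqrt_pos.2 hp
  have : 0 < √(1 - p) := Real.sqrt_pos.2 hq
  have : 0 < √(N : ℝ) := Real.sqrt_pos.2 hN0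
  field_simp
  rw [hsp]
  ring

theorem tendsto_sqrt_natCast_sub_div_natCast_sub (a b : ℝ) :
    Tendsto (fun N : ℕ => √((N - a) / (N - b))) atTop (𝓝 1) := by
  have h := tendsto_add_mul_div_add_mul_atTop_nhds (-a) (-b) (1 : ℝ) one_ne_zero
  rw [div_one] at h
  simpa [neg_add_eq_sub, Function.comp_def] using (Real.continuous_sqrt.tendsto 1).comp h

theorem tendsto_sqrt_div_natCast_sub {r : ℕ → ℝ} {ρ : ℝ} (hr : Tendsto r atTop (𝓝 ρ)) (b : ℝ) :
    Tendsto (fun N : ℕ => √(r N / (N - b))) atTop (𝓝 0) := by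
  have hinv : Tendsto (fun N : ℕ => ((N : ℝ) - b)⁻¹) atTop (𝓝 0) :=
    (tendsto_atTop_add_const_right atTop (-b) tendsto_natCast_atTop_atTop).inv_tendsto_atTop
  have h := hr.mul hinv
  rw [mul_zero] at h
  replace h := (Real.continuous_sqrt.tendsto 0).comp h
  simpa [div_eq_mul_inv, Function.comp_def] using h

theorem tendsto_krawtchouk_coeff {z : ℕ → ℕ} {r : ℕ → ℝ} {ρ v : ℝ} (hr0 : ∀ N, 0 ≤ r N)
    (hr : Tendsto r atTop (𝓝 ρ)) (hρ : ρ ≠ 0)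
    (hu : Tendsto (fun N : ℕ => (N - z N - (r N)⁻¹ * z N) * √(r N / N)) atTop (𝓝 (-v)))
    (k : ℕ) :
    Tendsto (fun N : ℕ => (N - z N - (r N)⁻¹ * z N - (1 - (r N)⁻¹) * (k + 1))
      * √(r N / (N - k - 1))) atTop (𝓝 (-v)) := by
  -- The coefficient is `u_N √(N / (N - k - 1))` minus a term of order `N^(-1/2)`.
  have h1 := hu.mul (tendsto_sqrt_natCast_sub_div_natCast_sub 0 (k + 1))
  have h2 := (((tendsto_const_nhds (x := (1 : ℝ))).sub (hr.inv₀ hρ)).mul_const ((k : ℝ) + 1)).mul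
    (tendsto_sqrt_div_natCast_sub hr (k + 1))
  rw [← sub_zero (-v)]
  convert (h1.sub h2).congr' ?_ using 2
  · ring
  filter_upwards [eventually_gt_atTop (k + 1)] with N hN
  have hN0 : (0 : ℝ) < N := by exact_mod_cast (show 0 < N by omega)
  rw [sub_zero, mul_assoc, ← Real.sqrt_mul (div_nonneg (hr0 N) hN0.le),
    div_mul_div_cancel₀ hN0.ne', sub_sub (N : ℝ) k 1]
  ring

theorem stmt_13 (p : ℝ) (hp : 0 < p) (hp1 : p < 1)
    (pN : ℕ → ℝ) (hpN : ∀ N, 0 < pN N ∧ pN N < 1)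
    (hpNp : Filter.Tendsto pN Filter.atTop (nhds p))
    (Q : (N : ℕ) → ℕ → ℕ → ℝ)
    (hQ : ∀ N : ℕ, ∀ x ≤ N, ∀ s : ℝ,
      ∑ k ∈ Finset.range (N + 1), (N.choose k : ℝ) * Q N k x * s ^ k
        = (1 - ((1 - pN N) / pN N) * s) ^ x * (1 + s) ^ (N - x))
    (z : ℕ → ℕ) (hz : ∀ N, z N ≤ N) (v : ℝ)
    (hconv : Filter.Tendsto
      (fun N : ℕ => ((z N : ℝ) - N * pN N) / Real.sqrt (N * pN N * (1 - pN N)))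
      Filter.atTop (nhds v))
    (n : ℕ) :
    Filter.Tendsto
      (fun N : ℕ =>
        Real.sqrt ((n.factorial : ℝ) * (N.choose n : ℝ) * (pN N / (1 - pN N)) ^ n)
          * Q N n (z N))
      Filter.atTop
      (nhds ((-1) ^ n * (Polynomial.aeval v (Polynomial.hermite n) : ℝ))) := by
  set r : ℕ → ℝ := fun N => pN N / (1 - pN N)
  have hr0 (N : ℕ) : 0 < r N := div_pos (hpN N).1 (sub_pos.2 (hpN N).2)
  have hr : Tendsto r atTop (𝓝 (p / (1 - p))) :=
    hpNp.div (tendsto_const_nhds.sub hpNp) (sub_pos.2 hp1).ne'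
  have hQr (N : ℕ) : HasKrawtchoukGenFun N (z N) (r N)⁻¹ (Q N · (z N)) := by
    rw [inv_div]; exact hQ N (z N) (hz N)
  have hu : Tendsto (fun N : ℕ => (N - z N - (r N)⁻¹ * z N) * √(r N / N)) atTop (𝓝 (-v)) := by
    refine hconv.neg.congr' ?_
    filter_upwards [eventually_ge_atTop 1] with N hN
    rw [neg_standardized_eq (hpN N).1 (hpN N).2 hN]
  change Tendsto (fun N => krawtchoukScale N (r N) n * Q N n (z N)) atTop _
  induction n using Nat.twoStepInduction with
  | zero => simp [krawtchoukScale_zero, krawtchouk_zero (hQr _)]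
  | one =>
    rw [pow_one, hermite_one, aeval_X, neg_one_mul]
    refine hu.congr' ?_
    filter_upwards [eventually_ge_atTop 1] with N hN
    rw [krawtchoukScale_mul_one (hr0 N) (hQr N) (hz N) hN]
  | more k ih₁ ih₂ =>
    have hA := tendsto_krawtchouk_coeff (fun N => (hr0 N).le) hr
      (div_pos hp (sub_pos.2 hp1)).ne' hu k
    have hB := (tendsto_sqrt_natCast_sub_div_natCast_sub k (k + 1)).const_mul ((k : ℝ) + 1)
    convert (hA.mul ih₂).sub (hB.mul ih₁) |>.congr' ?_ using 2
    · rw [hermite_add_two]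
      simp only [map_sub, map_mul, map_add, map_one, map_natCast, aeval_X]
      ring
    filter_upwards [eventually_ge_atTop (k + 2)] with N hN
    rw [krawtchoukScale_mul_add_two (hr0 N) (hQr N) (hz N) hN, sub_sub (N : ℝ) k 1]
end

section
/- Cutoff calculation for geometric eigenvalues: let ρ ∈ (0,1), p ∈ (0,1), q = 1-p, and t_N = (log N + log(p/q) + C)/(-2 log ρ). Then ∑_{n=1}^N C(N,n)(p/q)^n ρ^{2n t_N} = (1 + (p/q)ρ^{2t_N})^N - 1 → e^{e^{-C}} - 1 as N → ∞. -/
/-!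
Writing `x_N = (p/q) ρ^(2 t_N)`, the sum is the binomial expansion of `(1 + x_N)^N` without its
`n = 0` term. The cutoff time `t_N` is chosen exactly so that `x_N = e^(-C) / N`, and
`(1 + e^(-C) / N)^N → exp (e^(-C))`.
-/

open Finset Filter

theorem sum_Icc_one_choose_mul_pow {R : Type*} [CommRing R] (x : R) (N : ℕ) :
    ∑ n ∈ Icc 1 N, (N.choose n : R) * x ^ n = (1 + x) ^ N - 1 := by
  rw [add_comm, add_pow, range_eq_Ico, sum_eq_sum_Ico_succ_bot N.add_one_pos, zero_add,
    Ico_add_one_right_eq_Icc]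
  simp [mul_comm]

namespace Real

theorem mul_rpow_eq_exp_neg_div {ρ a x : ℝ} (hρ : 0 < ρ) (hρ1 : ρ ≠ 1) (ha : 0 < a)
    (hx : 0 < x) (C : ℝ) :
    a * ρ ^ (2 * ((log x + log a + C) / (-2 * log ρ))) = exp (-C) / x := by
  have hlog : log ρ ≠ 0 := log_ne_zero_of_pos_of_ne_one hρ hρ1
  have hexponent : log ρ * (2 * ((log x + log a + C) / (-2 * log ρ)))
      = -log a + -C + -log x := by
    field_simp
    ring
  rw [rpow_def_of_pos hρ, hexponent, exp_add, exp_add, exp_neg, exp_log ha,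
    exp_neg (log x), exp_log hx]
  field_simp

end Real

theorem stmt_18 (ρ : ℝ) (hρ : 0 < ρ) (hρ1 : ρ < 1)
    (p q : ℝ) (hp : 0 < p) (hp1 : p < 1) (hq : q = 1 - p) (C : ℝ)
    (tN : ℕ → ℝ)
    (htN : ∀ N : ℕ, tN N = (Real.log N + Real.log (p / q) + C) / (-2 * Real.log ρ)) :
    (∀ N : ℕ,
      ∑ n ∈ Finset.Icc 1 N, (N.choose n : ℝ) * (p / q) ^ n * ρ ^ (2 * (n : ℝ) * tN N)
        = (1 + (p / q) * ρ ^ (2 * tN N)) ^ N - 1)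
    ∧ Filter.Tendsto (fun N : ℕ => (1 + (p / q) * ρ ^ (2 * tN N)) ^ N - 1)
        Filter.atTop (nhds (Real.exp (Real.exp (-C)) - 1)) := by
  have hpq : 0 < p / q := div_pos hp (by linarith)
  refine ⟨fun N => ?_, ?_⟩
  · rw [← sum_Icc_one_choose_mul_pow]
    refine sum_congr rfl fun n _ => ?_
    rw [mul_pow, ← Real.rpow_mul_natCast hρ.le, mul_right_comm 2 (n : ℝ), mul_assoc]
  · refine ((Real.tendsto_one_add_div_pow_exp _).sub_const 1).congr' ?_
    filter_upwards [eventually_gt_atTop 0] with N hN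
    rw [htN, Real.mul_rpow_eq_exp_neg_div hρ hρ1.ne hpq (Nat.cast_pos.mpr hN)]
end
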